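/- Let n ≥ 2 and let (m_i) be a finite family of nonnegative integers satisfying Σ m_i = 3(n−1) and Σ m_i² = n² − 1. Then the three largest values m₁ ≥ m₂ ≥ m₃ among the m_i satisfy the Noether inequality m₁ + m₂ + m₃ > n. -/
import Mathlib


/-- Noether inequality: if n ≥ 2 and the nonnegative integers m_i satisfy
Σ m_i = 3(n−1) and Σ m_i² = n²−1, then the three largest satisfy m₁+m₂+m₃ > n. -/
theorem noether_inequality (n r : ℕ) (hn : 2 ≤ n) (hr : 3 ≤ r)
    (m : Fin r → ℕ) (hsort : Antitone m)
    (hsum : ∑ i, m i = 3 * (n - 1))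
    (hsq : ∑ i, (m i) ^ 2 = n ^ 2 - 1) :
    n < m ⟨0, by omega⟩ + m ⟨1, by omega⟩ + m ⟨2, by omega⟩ := by
  set i0 : Fin r := ⟨0, by omega⟩
  set i1 : Fin r := ⟨1, by omega⟩
  set i2 : Fin r := ⟨2, by omega⟩
  have h1 : 1 ≤ n := by omega
  have h2 : 1 ≤ n ^ 2 := by nlinarith
  zify [h1, h2] at hsum hsq
  -- m i0 ≤ n - 1 since (m i0)^2 ≤ n^2 - 1
  have hsq0 : ((m i0 : ℤ)) ^ 2 ≤ (n : ℤ) ^ 2 - 1 := by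
    rw [← hsq]
    have : ∀ i ∈ (Finset.univ : Finset (Fin r)), (0:ℤ) ≤ (m i : ℤ) ^ 2 := by
      intro i _; positivity
    exact Finset.single_le_sum this (Finset.mem_univ i0)
  have hm0 : (m i0 : ℤ) ≤ (n : ℤ) - 1 := by nlinarith [Int.natCast_nonneg (m i0)]
  have h10 : (m i1 : ℤ) ≤ (m i0 : ℤ) := by
    exact_mod_cast hsort (show i0 ≤ i1 by simp [i0, i1, Fin.le_def])
  have h21 : (m i2 : ℤ) ≤ (m i1 : ℤ) := by
    exact_mod_cast hsort (show i1 ≤ i2 by simp [i1, i2, Fin.le_def])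
  have hne01 : i0 ≠ i1 := by simp [i0, i1, Fin.ext_iff]
  have hne11 : i1 ≠ i0 := by simp [i0, i1, Fin.ext_iff]
  -- key pointwise bound
  have hkey : ∑ i, ((m i : ℤ)) ^ 2 ≤
      ∑ i, ((m i2 : ℤ) * (m i : ℤ)
        + (if i = i0 then ((n : ℤ) - 1) * ((m i0 : ℤ) - (m i2 : ℤ)) else 0)
        + (if i = i1 then ((n : ℤ) - 1) * ((m i1 : ℤ) - (m i2 : ℤ)) else 0)) := by
    apply Finset.sum_le_sum
    intro i _
    by_cases hi0 : i = i0
    · subst hi0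
      simp only [if_pos rfl, if_neg hne01, ite_true]
      nlinarith [mul_nonneg (sub_nonneg.mpr (le_trans h21 h10))
        (sub_nonneg.mpr hm0)]
    · by_cases hi1 : i = i1
      · subst hi1
        simp only [if_pos rfl, if_neg hne11, ite_true]
        have hm1 : (m i1 : ℤ) ≤ (n : ℤ) - 1 := le_trans h10 hm0
        nlinarith [mul_nonneg (sub_nonneg.mpr h21) (sub_nonneg.mpr hm1)]
      · simp only [if_neg hi0, if_neg hi1, add_zero]
        have hle : (m i : ℤ) ≤ (m i2 : ℤ) := by
          refine Int.ofNat_le.mpr (hsort ?_)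
          have : i.val ≠ 0 := fun h => hi0 (Fin.ext h)
          have : i.val ≠ 1 := fun h => hi1 (Fin.ext h)
          simp only [Fin.le_def, i2]
          omega
        nlinarith [Int.natCast_nonneg (m i)]
  have hsplit : ∑ i, ((m i2 : ℤ) * (m i : ℤ)
        + (if i = i0 then ((n : ℤ) - 1) * ((m i0 : ℤ) - (m i2 : ℤ)) else 0)
        + (if i = i1 then ((n : ℤ) - 1) * ((m i1 : ℤ) - (m i2 : ℤ)) else 0))
      = (m i2 : ℤ) * (3 * ((n : ℤ) - 1))
        + ((n : ℤ) - 1) * ((m i0 : ℤ) - (m i2 : ℤ))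
        + ((n : ℤ) - 1) * ((m i1 : ℤ) - (m i2 : ℤ)) := by
    rw [Finset.sum_add_distrib, Finset.sum_add_distrib, ← Finset.mul_sum, hsum,
      Finset.sum_ite_eq' Finset.univ i0, Finset.sum_ite_eq' Finset.univ i1]
    simp
  rw [hsplit, hsq] at hkey
  have goal' : (n : ℤ) < (m i0 : ℤ) + (m i1 : ℤ) + (m i2 : ℤ) := by nlinarith
  exact_mod_cast goal'
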